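/- A subset A of a generalized topological space (X, μ) is sλ-closed if and only if A = sA^∧ ∩ scl_μ(A), where sA^∧ is the intersection of all sμ-open supersets of A and scl_μ(A) is the intersection of all sμ-closed supersets of A. -/
import Mathlib


open Set

variable {X : Type*}

def IsGT (μ : Set (Set X)) : Prop :=
  ∅ ∈ μ ∧ ∀ S : Set (Set X), S ⊆ μ → ⋃₀ S ∈ μ

def muInt (μ : Set (Set X)) (A : Set X) : Set X := ⋃₀ {U | U ∈ μ ∧ U ⊆ A}

def muCl (μ : Set (Set X)) (A : Set X) : Set X := ⋂₀ {F | Fᶜ ∈ μ ∧ A ⊆ F}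

def sOpen (μ : Set (Set X)) (A : Set X) : Prop := A ⊆ muCl μ (muInt μ A)

def sClosed (μ : Set (Set X)) (A : Set X) : Prop := sOpen μ Aᶜ

def sInt (μ : Set (Set X)) (A : Set X) : Set X := ⋃₀ {U | sOpen μ U ∧ U ⊆ A}

def sCl (μ : Set (Set X)) (A : Set X) : Set X := ⋂₀ {F | sClosed μ F ∧ A ⊆ F}

def sWedge (μ : Set (Set X)) (A : Set X) : Set X := ⋂₀ {U | sOpen μ U ∧ A ⊆ U}

def sVee (μ : Set (Set X)) (A : Set X) : Set X := ⋃₀ {F | sClosed μ F ∧ F ⊆ A}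

def sLambdaClosed (μ : Set (Set X)) (A : Set X) : Prop :=
  ∃ K P : Set X, K = sWedge μ K ∧ sClosed μ P ∧ A = K ∩ P

def sLambdaOpen (μ : Set (Set X)) (A : Set X) : Prop := sLambdaClosed μ Aᶜ

def sclL (μ : Set (Set X)) (A : Set X) : Set X := ⋂₀ {F | sLambdaClosed μ F ∧ A ⊆ F}

def sIntL (μ : Set (Set X)) (A : Set X) : Set X := ⋃₀ {U | sLambdaOpen μ U ∧ U ⊆ A}

def sWedgeL (μ : Set (Set X)) (A : Set X) : Set X := ⋂₀ {U | sLambdaOpen μ U ∧ A ⊆ U}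

def sVeeL (μ : Set (Set X)) (A : Set X) : Set X := ⋃₀ {F | sLambdaClosed μ F ∧ F ⊆ A}

def sgClosed (μ : Set (Set X)) (A : Set X) : Prop :=
  ∀ U : Set X, sLambdaOpen μ U → A ⊆ U → sclL μ A ⊆ U

def sgOpen (μ : Set (Set X)) (A : Set X) : Prop := sgClosed μ Aᶜ

def sBetaClosed (μ : Set (Set X)) (A : Set X) : Prop :=
  ∃ H Q : Set X, H = sWedgeL μ H ∧ sLambdaClosed μ Q ∧ A = H ∩ Q

def sT0 (μ : Set (Set X)) : Prop :=
  ∀ x y : X, x ≠ y → ∃ U : Set X, sLambdaOpen μ U ∧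
    ((x ∈ U ∧ y ∉ U) ∨ (y ∈ U ∧ x ∉ U))

def sT1 (μ : Set (Set X)) : Prop :=
  ∀ x y : X, x ≠ y → ∃ U V : Set X, sLambdaOpen μ U ∧ sLambdaOpen μ V ∧
    x ∈ U ∧ y ∉ U ∧ y ∈ V ∧ x ∉ V

lemma muInt_mono (μ : Set (Set X)) {A B : Set X} (h : A ⊆ B) :
    muInt μ A ⊆ muInt μ B := by
  intro x hx
  obtain ⟨U, ⟨hU, hUA⟩, hxU⟩ := hx
  exact ⟨U, ⟨hU, hUA.trans h⟩, hxU⟩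

lemma muCl_mono (μ : Set (Set X)) {A B : Set X} (h : A ⊆ B) :
    muCl μ A ⊆ muCl μ B := by
  intro x hx F hF
  exact hx F ⟨hF.1, h.trans hF.2⟩

lemma sOpen_sUnion (μ : Set (Set X)) {S : Set (Set X)}
    (h : ∀ U ∈ S, sOpen μ U) : sOpen μ (⋃₀ S) := by
  intro x hx
  obtain ⟨U, hUS, hxU⟩ := hx
  exact muCl_mono μ (muInt_mono μ (subset_sUnion_of_mem hUS)) (h U hUS hxU)

lemma sClosed_sCl (μ : Set (Set X)) (A : Set X) : sClosed μ (sCl μ A) := by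
  have : (sCl μ A)ᶜ = ⋃₀ {U | sOpen μ U ∧ A ⊆ Uᶜ} := by
    ext x
    simp only [sCl, mem_compl_iff, mem_sInter, mem_setOf_eq, mem_sUnion, not_forall]
    constructor
    · rintro ⟨F, ⟨hF, hAF⟩, hxF⟩
      exact ⟨Fᶜ, ⟨hF, by simpa using hAF⟩, hxF⟩
    · rintro ⟨U, ⟨hU, hAU⟩, hxU⟩
      exact ⟨Uᶜ, ⟨by simpa [sClosed] using hU, hAU⟩, by simpa using hxU⟩
  show sOpen μ _
  rw [this]
  exact sOpen_sUnion μ (fun U hU => hU.1)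

lemma subset_sWedge (μ : Set (Set X)) (A : Set X) : A ⊆ sWedge μ A :=
  fun x hx U hU => hU.2 hx

lemma sWedge_mono (μ : Set (Set X)) {A B : Set X} (h : A ⊆ B) :
    sWedge μ A ⊆ sWedge μ B :=
  fun x hx U hU => hx U ⟨hU.1, h.trans hU.2⟩

lemma sWedge_idem (μ : Set (Set X)) (A : Set X) :
    sWedge μ (sWedge μ A) = sWedge μ A := by
  apply Subset.antisymm
  · intro x hx U hU
    exact hx U ⟨hU.1, fun y hy => hy U hU⟩
  · exact sWedge_mono μ (subset_sWedge μ A)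

theorem stmt6 (μ : Set (Set X)) (hμ : IsGT μ) (A : Set X) :
    sLambdaClosed μ A ↔ A = sWedge μ A ∩ sCl μ A := by
  constructor
  · rintro ⟨K, P, hK, hP, rfl⟩
    apply Subset.antisymm
    · exact subset_inter (subset_sWedge μ _) (fun x hx F hF => hF.2 hx)
    · intro x hx
      refine ⟨?_, ?_⟩
      · have : sWedge μ (K ∩ P) ⊆ K :=
          (sWedge_mono μ inter_subset_left).trans hK.symm.subset
        exact this hx.1
      · exact hx.2 P ⟨hP, inter_subset_right⟩
  · intro h
    refine ⟨sWedge μ A, sCl μ A, ?_, sClosed_sCl μ A, h⟩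
    exact (sWedge_idem μ A).symm
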